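/- Let α, γ be weak compositions. If rajcode(α) = rajcode(γ), then dark(α) = dark(γ); that is, the snow diagrams of D(α) and D(γ) have their dark clouds at identical positions. -/

import Mathlib

open scoped Classical

noncomputable section

/-- A weak composition: a finitely supported sequence of naturals.  Indices are
thought of as positive integers; index `0` is required to satisfy `α 0 = 0`. -/
abbrev WeakComp := ℕ →₀ ℕ

/-- A weak composition is snowy if its positive entries are pairwise distinct. -/
def Snowy (α : WeakComp) : Prop :=
  ∀ r r', 0 < α r → α r = α r' → r = r'

/-- The key diagram of a weak composition: the left-justified diagram with
`α r` cells in row `r` (columns `1, …, α r`). -/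
def keyDiagram (α : WeakComp) : Finset (ℕ × ℕ) :=
  α.support.biUnion fun r => (Finset.Icc 1 (α r)).image fun c => (r, c)

/-- Largest row index occurring in a diagram. -/
def rowBound (D : Finset (ℕ × ℕ)) : ℕ := (D.image Prod.fst).sup id

/-- One step of the snow-diagram algorithm: in row `r`, mark as a dark cloud the
rightmost cell of `D` whose column contains no dark cloud of `S` yet. -/
def darkStep (D S : Finset (ℕ × ℕ)) (r : ℕ) : Finset (ℕ × ℕ) :=
  let cols := (D.filter fun p => p.1 = r ∧ ∀ q ∈ S, q.2 ≠ p.2).image Prod.snd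
  if h : cols.Nonempty then insert (r, cols.max' h) S else S

/-- Process rows `N, N-1, …, N-k+1` from bottom to top. -/
def darkAux (D : Finset (ℕ × ℕ)) (N : ℕ) : ℕ → Finset (ℕ × ℕ)
  | 0 => ∅
  | k + 1 => darkStep D (darkAux D N k) (N - k)

/-- The dark cloud diagram of a diagram `D`: iterate the rows of `D` from bottom
to top, marking in each row the rightmost cell whose column contains no dark
cloud from a lower row. -/
def dark (D : Finset (ℕ × ℕ)) : Finset (ℕ × ℕ) := darkAux D (rowBound D) (rowBound D)

/-- The underlying diagram of the snow diagram of `D`: the cells of `D` together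
with all (snowflake) positions above a dark cloud in its column. -/
def snow (D : Finset (ℕ × ℕ)) : Finset (ℕ × ℕ) :=
  D ∪ (dark D).biUnion fun p => (Finset.Icc 1 p.1).image fun r => (r, p.2)

/-- `rajcode` of a diagram: the number of cells in row `r` of its snow diagram. -/
def rajcodeD (D : Finset (ℕ × ℕ)) (r : ℕ) : ℕ :=
  ((snow D).filter fun p => p.1 = r).card

/-- `raj` of a diagram: the total number of cells of its snow diagram. -/
def rajD (D : Finset (ℕ × ℕ)) : ℕ := (snow D).card

/-- `rajcode` of a weak composition. -/
def rajcode (α : WeakComp) (r : ℕ) : ℕ := rajcodeD (keyDiagram α) r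

/-- `raj` of a weak composition. -/
def raj (α : WeakComp) : ℕ := rajD (keyDiagram α)

/-- Non-attacking rook diagram: a finite subset of `ℤ_{>0} × ℤ_{>0}` with at
most one cell in each row and at most one cell in each column. -/
def IsRook (R : Finset (ℕ × ℕ)) : Prop :=
  (∀ p ∈ R, 1 ≤ p.1 ∧ 1 ≤ p.2) ∧
    ∀ p ∈ R, ∀ q ∈ R, (p.1 = q.1 ∨ p.2 = q.2) → p = q

/-- The sum `|α|` of the entries of a weak composition. -/
def wsum (α : WeakComp) : ℕ := α.sum fun _ v => v

/-- The number of pairs `(r, r')` with `1 ≤ r < r'` and `α r < α r'`. -/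
def invCount (α : WeakComp) : ℕ :=
  ((Finset.Icc 1 (α.support.sup id) ×ˢ α.support).filter fun p =>
      p.1 < p.2 ∧ α p.1 < α p.2).card

/-- Swap entries `i` and `i+1` of a weak composition. -/
def swapEntries (i : ℕ) (α : WeakComp) : WeakComp :=
  Finsupp.equivMapDomain (Equiv.swap i (i + 1)) α

/-- The Rothe diagram of `w ∈ S_n`, in 1-based coordinates:
`{(r, w(r')) : r < r', w(r) > w(r')}`. -/
def rothe {n : ℕ} (w : Equiv.Perm (Fin n)) : Finset (ℕ × ℕ) :=
  (Finset.univ.filter fun p : Fin n × Fin n => p.1 < p.2 ∧ w p.2 < w p.1).image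
    fun p => ((p.1 : ℕ) + 1, (w p.2 : ℕ) + 1)

/-- Length of the longest increasing subsequence of `w` starting at position `r`
(equivalently, starting with the value `w r`). -/
def LISfrom {n : ℕ} (w : Equiv.Perm (Fin n)) (r : Fin n) : ℕ :=
  Finset.sup (Finset.univ.filter fun s : Finset (Fin n) =>
      r ∈ s ∧ (∀ i ∈ s, r ≤ i) ∧ ∀ i ∈ s, ∀ j ∈ s, i < j → w i < w j)
    Finset.card

/-- Insert `x` into a strictly decreasing row: replace the largest entry `< x`
(returning it as bumped), or append `x` at the end. -/
def insertRow : List ℕ → ℕ → List ℕ × Option ℕ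
  | [], x => ([x], none)
  | a :: t, x =>
      if a < x then (x :: t, some a)
      else (a :: (insertRow t x).1, (insertRow t x).2)

/-- The 1-based value of `w` at 0-based position `i` (0 if out of range). -/
def oneline {n : ℕ} (w : Equiv.Perm (Fin n)) (i : ℕ) : ℕ :=
  if h : i < n then (w ⟨i, h⟩ : ℕ) + 1 else 0

/-- Row one of the Schensted insertion tableau after the first `k` insertions of
the values `w(n), w(n-1), …` (1-based values, inserted from the last position). -/
def rowOneAux {n : ℕ} (w : Equiv.Perm (Fin n)) : ℕ → List ℕ
  | 0 => []
  | k + 1 => (insertRow (rowOneAux w k) (oneline w (n - 1 - k))).1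

/-- The value bumped from row one when the value `w r` is inserted (during the
Schensted insertion of `w(n), …, w(1)` into the empty tableau); `none` if `w r`
is appended at the end of row one. -/
def bumpedFromRowOne {n : ℕ} (w : Equiv.Perm (Fin n)) (r : Fin n) : Option ℕ :=
  (insertRow (rowOneAux w (n - 1 - (r : ℕ))) (oneline w (r : ℕ))).2

/-- Position `i` starts a maximal decreasing run of `u` (in one-line notation). -/
def IsRunStart {n : ℕ} (u : Equiv.Perm (Fin n)) (i : Fin n) : Prop :=
  ∀ j : Fin n, (j : ℕ) + 1 = (i : ℕ) → u j < u i

/-- A fireworks permutation: the initial elements of its maximal decreasing runs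
are increasing. -/
def Fireworks {n : ℕ} (u : Equiv.Perm (Fin n)) : Prop :=
  ∀ i j : Fin n, IsRunStart u i → IsRunStart u j → i < j → u i < u j

/-- An inverse fireworks permutation. -/
def InverseFireworks {n : ℕ} (w : Equiv.Perm (Fin n)) : Prop := Fireworks w⁻¹

/-- The `n`-th Bell number: the number of set partitions (equivalence relations)
of an `n`-element set. -/
def bell (n : ℕ) : ℕ := Nat.card (Setoid (Fin n))

/-- The staircase board `Stair_n = {(r,c) : 1 ≤ r ≤ n-1, 1 ≤ c ≤ n-r}`. -/
def stair (n : ℕ) : Finset (ℕ × ℕ) :=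
  (Finset.Icc 1 n ×ˢ Finset.Icc 1 n).filter fun p => p.1 ≤ n - 1 ∧ p.2 ≤ n - p.1

/-- All cells weakly above a rook of `R` in its column, or weakly to the left of
a rook of `R` in its row. -/
def hooks (R : Finset (ℕ × ℕ)) : Finset (ℕ × ℕ) :=
  R.biUnion fun p =>
    ((Finset.Icc 1 p.1).image fun r => (r, p.2)) ∪
      ((Finset.Icc 1 p.2).image fun c => (p.1, c))

/-- The Northwest number `NW(R)`. -/
def NW (R : Finset (ℕ × ℕ)) : ℕ := (hooks R).card

/-- The Garsia–Remmel statistic: the number of cells of `Stair_n` that are not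
weakly above a rook in its column and not weakly to the left of a rook in its
row. -/
def GRcount (n : ℕ) (R : Finset (ℕ × ℕ)) : ℕ :=
  ((stair n).filter fun q =>
      ¬ ∃ p ∈ R, (p.2 = q.2 ∧ q.1 ≤ p.1) ∨ (p.1 = q.1 ∧ q.2 ≤ p.2)).card

/-- Garsia–Remmel `q`-Stirling numbers of the second kind. -/
def qStirling : ℕ → ℕ → Polynomial ℤ
  | 0, 0 => 1
  | 0, _ + 1 => 0
  | _ + 1, 0 => 0
  | n + 1, k + 1 =>
      Polynomial.X ^ k * qStirling n k +
        (∑ i ∈ Finset.range (k + 1), Polynomial.X ^ i) * qStirling n (k + 1)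

/-- The `q`-Bell polynomial `B_n(q) = Σ_{k=0}^n S_{n,k}(q)`. -/
def qBell (n : ℕ) : Polynomial ℤ := ∑ k ∈ Finset.range (n + 1), qStirling n k

/-- Tail lexicographic order on exponent vectors: `γ < α` iff there is `k` with
`γ k < α k` and `γ j = α j` for all `j > k`. -/
def TailLt (γ α : ℕ →₀ ℕ) : Prop :=
  ∃ k, γ k < α k ∧ ∀ j, k < j → γ j = α j


/-!
Row `r ≥ 1` of the snow diagram of `D(α)` consists of the columns `1, …, α r` together with the
columns of the dark clouds strictly below row `r`: a dark cloud in row `r` is itself a cell of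
`D(α)`. The dark clouds are computed row by row from the bottom, and starting the computation
below the lowest nonempty row changes nothing, so the computations for `α` and `γ` may be run in
lockstep from a common starting row. If the dark clouds below row `r` agree, with column set `C`,
then equal `rajcode`s in row `r` give `|[1, α r] ∪ C| = |[1, γ r] ∪ C|`; as the two intervals are
nested, `[1, α r] \ C = [1, γ r] \ C`, and this is exactly the set of columns the algorithm may
choose the dark cloud of row `r` from.
-/

theorem Finset.union_eq_union_of_card_eq {α : Type*} [DecidableEq α] {s t u : Finset α}
    (hst : s ⊆ t ∨ t ⊆ s) (h : (s ∪ u).card = (t ∪ u).card) : s ∪ u = t ∪ u := by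
  rcases hst with hst | hts
  · exact Finset.eq_of_subset_of_card_le (Finset.union_subset_union_left hst) h.ge
  · exact (Finset.eq_of_subset_of_card_le (Finset.union_subset_union_left hts) h.le).symm

section DarkClouds

variable {D S : Finset (ℕ × ℕ)} {N : ℕ}

theorem subset_darkStep (r : ℕ) : S ⊆ darkStep D S r := by
  dsimp only [darkStep]
  split_ifs
  · exact Finset.subset_insert _ _
  · exact subset_rfl

theorem mem_darkStep {r : ℕ} {p : ℕ × ℕ} (hp : p ∈ darkStep D S r) :
    p ∈ S ∨ p ∈ D ∧ p.1 = r := by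
  dsimp only [darkStep] at hp
  split_ifs at hp with hcols
  · rcases Finset.mem_insert.mp hp with rfl | hpS
    · obtain ⟨q, hq, hq2⟩ := Finset.mem_image.mp (Finset.max'_mem _ hcols)
      simp only [Finset.mem_filter] at hq
      obtain ⟨hqD, hq1, -⟩ := hq
      have hq_eq : q = (r, _) := Prod.ext hq1 hq2
      exact Or.inr ⟨hq_eq ▸ hqD, rfl⟩
    · exact Or.inl hpS
  · exact Or.inl hp

theorem darkStep_of_forall_fst_ne {r : ℕ} (hr : ∀ p ∈ D, p.1 ≠ r) : darkStep D S r = S := by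
  have hcols : ¬((D.filter fun p => p.1 = r ∧ ∀ q ∈ S, q.2 ≠ p.2).image Prod.snd).Nonempty := by
    simp only [Finset.image_nonempty, Finset.filter_nonempty_iff, not_exists, not_and]
    exact fun p hp hpr => absurd hpr (hr p hp)
  simp only [darkStep, dif_neg hcols]

theorem mem_darkAux {k : ℕ} (hk : k ≤ N) {p : ℕ × ℕ} (hp : p ∈ darkAux D N k) :
    p ∈ D ∧ N - k < p.1 ∧ p.1 ≤ N := by
  induction k with
  | zero => simp [darkAux] at hp
  | succ k ih =>
    rcases mem_darkStep hp with hp | ⟨hpD, hpk⟩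
    · have := ih (by omega) hp
      exact ⟨this.1, by omega, this.2.2⟩
    · exact ⟨hpD, by omega, by omega⟩

theorem filter_darkAux {j k : ℕ} (hjk : j ≤ k) (hk : k ≤ N) :
    (darkAux D N k).filter (fun p => N - j < p.1) = darkAux D N j := by
  induction k, hjk using Nat.le_induction with
  | base => exact Finset.filter_true_of_mem fun p hp => (mem_darkAux hk hp).2.1
  | succ k hjk ih =>
    rw [← ih (by omega)]
    ext p
    simp only [Finset.mem_filter]
    constructor
    · rintro ⟨hp, hpj⟩
      rcases mem_darkStep hp with hp | ⟨-, hpk⟩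
      · exact ⟨hp, hpj⟩
      · omega
    · exact fun ⟨hp, hpj⟩ => ⟨subset_darkStep _ hp, hpj⟩

theorem fst_le_rowBound {p : ℕ × ℕ} (hp : p ∈ D) : p.1 ≤ rowBound D :=
  Finset.le_sup (f := id) (Finset.mem_image_of_mem Prod.fst hp)

theorem darkAux_eq_empty_of_le_sub_rowBound {M k : ℕ} (hk : k ≤ M - rowBound D) :
    darkAux D M k = ∅ := by
  induction k with
  | zero => rfl
  | succ k ih =>
    rw [darkAux, ih (by omega)]
    exact darkStep_of_forall_fst_ne fun p hp => by have := fst_le_rowBound hp; omega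

theorem dark_eq_darkAux {M : ℕ} (hM : rowBound D ≤ M) : dark D = darkAux D M M := by
  have shift : ∀ j, darkAux D M (M - rowBound D + j) = darkAux D (rowBound D) j := by
    intro j
    induction j with
    | zero => exact darkAux_eq_empty_of_le_sub_rowBound le_rfl
    | succ j ih =>
      rw [← add_assoc, darkAux, darkAux, ih,
        show M - (M - rowBound D + j) = rowBound D - j by omega]
  rw [dark, ← shift, show M - rowBound D + rowBound D = M by omega]

theorem filter_snow_fst_eq {M r : ℕ} (hM : rowBound D ≤ M) (hr : 1 ≤ r) (hrM : r ≤ M) :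
    (snow D).filter (fun p => p.1 = r) =
      D.filter (fun p => p.1 = r) ∪ (darkAux D M (M - r)).image fun p => (r, p.2) := by
  have below : ∀ p, p ∈ darkAux D M (M - r) ↔ p ∈ dark D ∧ r < p.1 := fun p => by
    rw [dark_eq_darkAux hM, ← filter_darkAux (Nat.sub_le M r) le_rfl, Finset.mem_filter,
      Nat.sub_sub_self hrM]
  ext ⟨x, c⟩
  simp only [snow, Finset.mem_filter, Finset.mem_union, Finset.mem_biUnion, Finset.mem_image,
    Finset.mem_Icc, Prod.mk.injEq, below]
  constructor
  · rintro ⟨hD | ⟨p, hp, y, ⟨-, hyp⟩, rfl, rfl⟩, rfl⟩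
    · exact Or.inl ⟨hD, rfl⟩
    · rcases hyp.eq_or_lt with hyp | hyp
      · rw [dark_eq_darkAux hM] at hp
        exact Or.inl ⟨hyp ▸ (mem_darkAux le_rfl hp).1, rfl⟩
      · exact Or.inr ⟨p, ⟨hp, hyp⟩, rfl, rfl⟩
  · rintro (⟨hD, rfl⟩ | ⟨p, ⟨hp, hrp⟩, rfl, rfl⟩)
    · exact ⟨Or.inl hD, rfl⟩
    · exact ⟨Or.inr ⟨p, hp, r, ⟨hr, hrp.le⟩, rfl, rfl⟩, rfl⟩

end DarkClouds

section KeyDiagram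

theorem mem_keyDiagram {α : WeakComp} {p : ℕ × ℕ} :
    p ∈ keyDiagram α ↔ 1 ≤ p.2 ∧ p.2 ≤ α p.1 := by
  obtain ⟨r, c⟩ := p
  simp only [keyDiagram, Finset.mem_biUnion, Finset.mem_image, Finset.mem_Icc,
    Finsupp.mem_support_iff, Prod.mk.injEq]
  constructor
  · rintro ⟨r', -, c', hc', rfl, rfl⟩
    exact hc'
  · rintro ⟨h1, h2⟩
    exact ⟨r, by omega, c, ⟨h1, h2⟩, rfl, rfl⟩

theorem filter_keyDiagram_fst_eq (α : WeakComp) (r : ℕ) :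
    (keyDiagram α).filter (fun p => p.1 = r) = (Finset.Icc 1 (α r)).image fun c => (r, c) := by
  ext ⟨x, c⟩
  simp only [Finset.mem_filter, mem_keyDiagram, Finset.mem_image, Finset.mem_Icc, Prod.mk.injEq]
  constructor
  · rintro ⟨hc, rfl⟩
    exact ⟨c, hc, rfl, rfl⟩
  · rintro ⟨c, hc, rfl, rfl⟩
    exact ⟨hc, rfl⟩

theorem rajcode_eq_card_union {α : WeakComp} {M r : ℕ} (hM : rowBound (keyDiagram α) ≤ M)
    (hr : 1 ≤ r) (hrM : r ≤ M) :
    rajcode α r =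
      (Finset.Icc 1 (α r) ∪ (darkAux (keyDiagram α) M (M - r)).image Prod.snd).card := by
  have hdark : (darkAux (keyDiagram α) M (M - r)).image (fun p => (r, p.2)) =
      ((darkAux (keyDiagram α) M (M - r)).image Prod.snd).image fun c => (r, c) := by
    rw [Finset.image_image]
    rfl
  rw [rajcode, rajcodeD, filter_snow_fst_eq hM hr hrM, filter_keyDiagram_fst_eq, hdark,
    ← Finset.image_union,
    Finset.card_image_of_injective _ (Prod.mk_right_injective r)]

theorem darkStep_keyDiagram (α : WeakComp) (S : Finset (ℕ × ℕ)) (r : ℕ) :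
    darkStep (keyDiagram α) S r =
      if h : (Finset.Icc 1 (α r) \ S.image Prod.snd).Nonempty then
        insert (r, (Finset.Icc 1 (α r) \ S.image Prod.snd).max' h) S
      else S := by
  have cols : ((keyDiagram α).filter fun p => p.1 = r ∧ ∀ q ∈ S, q.2 ≠ p.2).image Prod.snd =
      Finset.Icc 1 (α r) \ S.image Prod.snd := by
    ext c
    simp only [Finset.mem_image, Finset.mem_filter, Finset.mem_sdiff, Finset.mem_Icc,
      mem_keyDiagram]
    constructor
    · rintro ⟨⟨r', c'⟩, ⟨hc, rfl, hS⟩, rfl⟩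
      exact ⟨hc, fun ⟨q, hq, hqc⟩ => hS q hq hqc⟩
    · rintro ⟨hc, hS⟩
      exact ⟨(r, c), ⟨hc, rfl, fun q hq hqc => hS ⟨q, hq, hqc⟩⟩, rfl⟩
  unfold darkStep
  simp only [cols]

theorem darkStep_keyDiagram_congr {α γ : WeakComp} {S : Finset (ℕ × ℕ)} {r : ℕ}
    (h : Finset.Icc 1 (α r) ∪ S.image Prod.snd = Finset.Icc 1 (γ r) ∪ S.image Prod.snd) :
    darkStep (keyDiagram α) S r = darkStep (keyDiagram γ) S r := by
  rw [darkStep_keyDiagram, darkStep_keyDiagram, ← Finset.union_sdiff_right, h,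
    Finset.union_sdiff_right]

end KeyDiagram

theorem darkAux_keyDiagram_eq_of_rajcode_eq {α γ : WeakComp} {M : ℕ}
    (hα : rowBound (keyDiagram α) ≤ M) (hγ : rowBound (keyDiagram γ) ≤ M)
    (h : ∀ r, rajcode α r = rajcode γ r) {k : ℕ} (hk : k ≤ M) :
    darkAux (keyDiagram α) M k = darkAux (keyDiagram γ) M k := by
  induction k with
  | zero => rfl
  | succ k ih =>
    have ih := ih (by omega)
    have hrow := h (M - k)
    rw [rajcode_eq_card_union hα (by omega) (by omega),
      rajcode_eq_card_union hγ (by omega) (by omega), Nat.sub_sub_self (by omega), ← ih] at hrow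
    have hnested : Finset.Icc 1 (α (M - k)) ⊆ Finset.Icc 1 (γ (M - k)) ∨
        Finset.Icc 1 (γ (M - k)) ⊆ Finset.Icc 1 (α (M - k)) :=
      (le_total _ _).imp Finset.Icc_subset_Icc_right Finset.Icc_subset_Icc_right
    rw [darkAux, darkAux, ← ih,
      darkStep_keyDiagram_congr (Finset.union_eq_union_of_card_eq hnested hrow)]

theorem dark_eq_of_rajcode_eq_general (α γ : WeakComp)
    (h : ∀ r, rajcode α r = rajcode γ r) :
    dark (keyDiagram α) = dark (keyDiagram γ) := by
  set M := max (rowBound (keyDiagram α)) (rowBound (keyDiagram γ))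
  rw [dark_eq_darkAux (le_max_left _ _ : _ ≤ M), dark_eq_darkAux (le_max_right _ _ : _ ≤ M)]
  exact darkAux_keyDiagram_eq_of_rajcode_eq (le_max_left _ _) (le_max_right _ _) h le_rfl

/-- equal rajcodes imply identical dark cloud positions. -/
theorem dark_eq_of_rajcode_eq (α γ : WeakComp) (hα : α 0 = 0) (hγ : γ 0 = 0)
    (h : ∀ r, rajcode α r = rajcode γ r) :
    dark (keyDiagram α) = dark (keyDiagram γ) :=
  dark_eq_of_rajcode_eq_general α γ h

end
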